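/- The subspace distance between the row spaces of two matrices is at most twice the rank of their difference: for matrices B_1 ∈ F^{m_1×m} and B_2 ∈ F^{m_2×m} over a field F (viewed with rows in F^m), d_S(⟨B_1⟩, ⟨B_2⟩) ≤ 2·rank(B_1 − B_2) whenever m_1 = m_2, where ⟨B⟩ denotes the row space of B. -/

import Mathlib

/-!
Every row of `B₁` is a row of `B₂` plus a row of `B₁ - B₂` and vice versa, so with
`D = ⟨B₁ - B₂⟩` both `⟨B₁⟩ + ⟨B₂⟩ ≤ ⟨B₂⟩ + D` and `⟨B₁⟩ + ⟨B₂⟩ ≤ ⟨B₁⟩ + D`.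
Adding the two resulting dimension bounds and using
`dim (U₁ + U₂) + dim (U₁ ∩ U₂) = dim U₁ + dim U₂` gives the claim.
-/

open Module Matrix

namespace Submodule

section

variable {K V : Type*} [DivisionRing K] [AddCommGroup V] [Module K V] [FiniteDimensional K V]

theorem finrank_sup_sub_finrank_inf_le_two_mul {U₁ U₂ D : Submodule K V}
    (h₁ : U₁ ≤ U₂ ⊔ D) (h₂ : U₂ ≤ U₁ ⊔ D) :
    finrank K ↥(U₁ ⊔ U₂) - finrank K ↥(U₁ ⊓ U₂) ≤ 2 * finrank K D := by
  have hsup₁ : finrank K ↥(U₁ ⊔ U₂) ≤ finrank K U₂ + finrank K D :=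
    (finrank_mono (sup_le h₁ le_sup_left)).trans (finrank_add_le_finrank_add_finrank _ _)
  have hsup₂ : finrank K ↥(U₁ ⊔ U₂) ≤ finrank K U₁ + finrank K D :=
    (finrank_mono (sup_le le_sup_left h₂)).trans (finrank_add_le_finrank_add_finrank _ _)
  have := finrank_sup_add_finrank_inf_eq U₁ U₂
  omega

end

section

variable {R M ι : Type*} [Ring R] [AddCommGroup M] [Module R M]

theorem span_range_le_sup_span_range_sub (f g : ι → M) :
    span R (Set.range f) ≤ span R (Set.range g) ⊔ span R (Set.range (f - g)) := by
  rw [span_le]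
  rintro _ ⟨i, rfl⟩
  rw [← add_sub_cancel (g i) (f i)]
  exact add_mem_sup (subset_span ⟨i, rfl⟩) (subset_span ⟨i, rfl⟩)

theorem span_range_le_sup_span_range_sub' (f g : ι → M) :
    span R (Set.range g) ≤ span R (Set.range f) ⊔ span R (Set.range (f - g)) := by
  rw [span_le]
  rintro _ ⟨i, rfl⟩
  rw [← sub_sub_cancel (f i) (g i)]
  exact sub_mem_sup (subset_span ⟨i, rfl⟩) (subset_span ⟨i, rfl⟩)

end

end Submodule

/-- The subspace distance between the row spaces of two matrices of the same
dimensions is at most twice the rank of their difference: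
`d_S(⟨B₁⟩, ⟨B₂⟩) ≤ 2·rank(B₁ − B₂)`. -/
theorem subspace_dist_rowSpaces_le_two_rank_sub {F : Type*} [Field F]
    {m₁ m : ℕ} (B₁ B₂ : Matrix (Fin m₁) (Fin m) F) :
    finrank F ↥(Submodule.span F (Set.range B₁) ⊔ Submodule.span F (Set.range B₂)) -
        finrank F ↥(Submodule.span F (Set.range B₁) ⊓ Submodule.span F (Set.range B₂)) ≤
      2 * (B₁ - B₂).rank := by
  rw [rank_eq_finrank_span_row]
  exact Submodule.finrank_sup_sub_finrank_inf_le_two_mul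
    (Submodule.span_range_le_sup_span_range_sub _ _)
    (Submodule.span_range_le_sup_span_range_sub' _ _)
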